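/- Let k and ℓ be positive integers, and let G = (V,E) be a graph on more than k vertices in which every vertex subset S ⊆ V of size |S| = k satisfies |N_G(S)| ≥ ℓ. Then G contains a path with ℓ edges. -/

import Mathlib

/-!
Depth-first search. At every stage the explored vertices `T` and the stack, a path `q` whose
first vertex is the top, are disjoint, and every neighbour of `T` outside `T` lies on `q`.
When the top `a` of the stack has no neighbour off `T ∪ q`, it is moved to `T`; then the
external neighbourhood of `insert a T` lies on `q` minus its first vertex, which has
`q.length` vertices. Since `|T|` grows by one at each such step, some stage has `|T| = k`,
and then `ℓ ≤ |N(T)| ≤ q.length`.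
-/

open scoped Classical

/-- The external neighborhood of a vertex set `U` in a simple graph `G`:
all vertices outside `U` having a neighbor in `U`. -/
def SimpleGraph.extNb {V : Type*} (G : SimpleGraph V) (U : Set V) : Set V :=
  {v | v ∉ U ∧ ∃ u ∈ U, G.Adj u v}

/-- A graph `G` on `n` vertices is an `α`-expander if every vertex subset `U` with
`|U| ≤ n/2` satisfies `|N_G(U)| ≥ α |U|`. -/
def SimpleGraph.IsExpander {V : Type*} [Fintype V] (G : SimpleGraph V) (α : ℝ) : Prop :=
  ∀ U : Set V, (U.ncard : ℝ) ≤ (Fintype.card V : ℝ) / 2 →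
    α * U.ncard ≤ ((G.extNb U).ncard : ℝ)

/-- `G` is a `(k, α)`-expander if every vertex subset `U` with `|U| ≤ k`
satisfies `|N_G(U)| ≥ α |U|`. -/
def SimpleGraph.IsKExpander {V : Type*} (G : SimpleGraph V) (k α : ℝ) : Prop :=
  ∀ U : Set V, (U.ncard : ℝ) ≤ k → α * U.ncard ≤ ((G.extNb U).ncard : ℝ)

lemma List.Nodup.ncard_setOf_mem {α : Type*} {l : List α} (h : l.Nodup) :
    {a | a ∈ l}.ncard = l.length := by
  rw [← List.coe_toFinset, Set.ncard_coe_finset, List.toFinset_card_of_nodup h]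

namespace SimpleGraph

variable {V : Type*} {G : SimpleGraph V}

@[simp]
lemma extNb_empty : G.extNb ∅ = ∅ := by
  simp [extNb]

lemma extNb_insert_subset (U : Set V) (a : V) :
    G.extNb (insert a U) ⊆ (G.extNb U ∪ G.neighborSet a) \ insert a U := by
  rintro v ⟨hv, u, hu, huv⟩
  refine ⟨?_, hv⟩
  rcases hu with rfl | hu
  · exact Or.inr huv
  · exact Or.inl ⟨fun h => hv (Or.inr h), u, hu, huv⟩

structure IsDFSStage (G : SimpleGraph V) (T : Set V) {a b : V} (q : G.Walk a b) : Prop where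
  isPath : q.IsPath
  disjoint : ∀ v ∈ q.support, v ∉ T
  extNb_subset : G.extNb T ⊆ {v | v ∈ q.support}

namespace IsDFSStage

variable {T : Set V} {a b : V} {q : G.Walk a b}

lemma nil (hvT : a ∉ T) (hT : G.extNb T = ∅) : G.IsDFSStage T (Walk.nil : G.Walk a a) where
  isPath := Walk.IsPath.nil
  disjoint v hv := by
    simp only [Walk.support_nil, List.mem_singleton] at hv
    rwa [hv]
  extNb_subset := by simp [hT]

lemma push (hs : G.IsDFSStage T q) {v : V} (hav : G.Adj a v) (hvT : v ∉ T)
    (hvq : v ∉ q.support) : G.IsDFSStage T (Walk.cons hav.symm q) where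
  isPath := hs.isPath.cons hvq
  disjoint w hw := by
    rcases List.mem_cons.mp (Walk.support_cons _ _ ▸ hw) with rfl | hw
    exacts [hvT, hs.disjoint w hw]
  extNb_subset w hw := List.mem_cons_of_mem _ (hs.extNb_subset hw)

lemma extNb_insert_subset (hs : G.IsDFSStage T q)
    (hexh : G.neighborSet a ⊆ T ∪ {v | v ∈ q.support}) :
    G.extNb (insert a T) ⊆ {v | v ∈ q.support.tail} := by
  intro v hv
  obtain ⟨hvN, hvaT⟩ := SimpleGraph.extNb_insert_subset T a hv
  have hvq : v ∈ q.support := hvN.elim (fun h => hs.extNb_subset h)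
    fun h => (hexh h).resolve_left fun hvT => hvaT (Or.inr hvT)
  rw [← q.cons_tail_support] at hvq
  exact (List.mem_cons.mp hvq).resolve_left fun hva => hvaT (Or.inl hva)

lemma pop (hs : G.IsDFSStage T q) (hq : ¬q.Nil)
    (hexh : G.neighborSet a ⊆ T ∪ {v | v ∈ q.support}) :
    G.IsDFSStage (insert a T) q.tail where
  isPath := hs.isPath.tail
  disjoint v hv := by
    rw [q.support_tail_of_not_nil hq] at hv
    have hnodup := hs.isPath.support_nodup
    rw [← q.cons_tail_support] at hnodup
    rintro (rfl | hvT)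
    · exact (List.nodup_cons.mp hnodup).1 hv
    · exact hs.disjoint v (List.mem_of_mem_tail hv) hvT
  extNb_subset := q.support_tail_of_not_nil hq ▸ hs.extNb_insert_subset hexh

lemma restart (hs : G.IsDFSStage T q) (hq : q.Nil)
    (hexh : G.neighborSet a ⊆ T ∪ {v | v ∈ q.support}) {v : V} (hv : v ∉ insert a T) :
    G.IsDFSStage (insert a T) (Walk.nil : G.Walk v v) :=
  nil hv <| Set.subset_empty_iff.mp <| by
    simpa [Walk.nil_iff_support_eq.mp hq] using hs.extNb_insert_subset hexh

lemma ncard_extNb_insert_le_length (hs : G.IsDFSStage T q)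
    (hexh : G.neighborSet a ⊆ T ∪ {v | v ∈ q.support}) :
    (G.extNb (insert a T)).ncard ≤ q.length :=
  calc (G.extNb (insert a T)).ncard
      ≤ {v | v ∈ q.support.tail}.ncard := Set.ncard_le_ncard (hs.extNb_insert_subset hexh) (List.finite_toSet _)
    _ = q.length := by
      rw [(hs.isPath.support_nodup.sublist (List.tail_sublist _)).ncard_setOf_mem,
        List.length_tail, Walk.length_support, Nat.add_sub_cancel]

variable [Fintype V]

lemma ncard_add_length_lt (hs : G.IsDFSStage T q) : T.ncard + q.length < Fintype.card V := by
  have hdisj : Disjoint T {v | v ∈ q.support} :=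
    Set.disjoint_left.mpr fun v hvT hvq => hs.disjoint v hvq hvT
  have := Set.ncard_union_eq hdisj
  rw [hs.isPath.support_nodup.ncard_setOf_mem, Walk.length_support] at this
  have := Set.ncard_le_card (T ∪ {v | v ∈ q.support})
  rw [Nat.card_eq_fintype_card] at this
  omega

theorem exists_isPath_ncard_extNb_le_length {T : Set V} {a b : V} {q : G.Walk a b}
    (hs : G.IsDFSStage T q) {m : ℕ} (hTm : T.ncard < m) (hm : m ≤ Fintype.card V) :
    ∃ U : Set V, U.ncard = m ∧
      ∃ (x y : V) (p : G.Walk x y), p.IsPath ∧ (G.extNb U).ncard ≤ p.length := by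
  have hbound := hs.ncard_add_length_lt  -- bounds the termination measure
  by_cases hpush : ∃ v, G.Adj a v ∧ v ∉ T ∧ v ∉ q.support
  · obtain ⟨v, hav, hvT, hvq⟩ := hpush
    have : (Walk.cons hav.symm q).length = q.length + 1 := rfl
    exact (hs.push hav hvT hvq).exists_isPath_ncard_extNb_le_length hTm hm
  have hexh : G.neighborSet a ⊆ T ∪ {v | v ∈ q.support} := fun v hav => by
    by_contra hv
    exact hpush ⟨v, hav, fun h => hv (Or.inl h), fun h => hv (Or.inr h)⟩
  have hcard : (insert a T).ncard = T.ncard + 1 :=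
    Set.ncard_insert_of_notMem (hs.disjoint a q.start_mem_support)
  by_cases hTm' : (insert a T).ncard = m
  · exact ⟨insert a T, hTm', a, b, q, hs.isPath, hs.ncard_extNb_insert_le_length hexh⟩
  by_cases hq : q.Nil
  · have hlt : (insert a T).ncard < Fintype.card V := by omega
    have hne : insert a T ≠ Set.univ := fun h => by
      rw [h, Set.ncard_univ, Nat.card_eq_fintype_card] at hlt
      exact hlt.false
    obtain ⟨v, hv⟩ := (Set.ne_univ_iff_exists_notMem _).mp hne
    have := Walk.length_eq_zero_iff.mpr hq
    exact (hs.restart hq hexh hv).exists_isPath_ncard_extNb_le_length (by omega) hm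
  · have := Walk.length_tail_add_one hq
    exact (hs.pop hq hexh).exists_isPath_ncard_extNb_le_length (by omega) hm
termination_by 2 * Fintype.card V - 2 * T.ncard - q.length
decreasing_by all_goals omega

end IsDFSStage

end SimpleGraph

open SimpleGraph in
theorem stmt_10_general {V : Type*} [Fintype V] (G : SimpleGraph V) (k ℓ : ℕ)
    (hk : 0 < k) (hn : k < Fintype.card V)
    (h : ∀ S : Set V, S.ncard = k → ℓ ≤ (G.extNb S).ncard) :
    ∃ (u w : V) (p : G.Walk u w), p.IsPath ∧ p.length = ℓ := by
  obtain ⟨v⟩ : Nonempty V := Fintype.card_pos_iff.mp (hk.trans hn)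
  obtain ⟨U, hU, x, y, p, hp, hlen⟩ :=
    (IsDFSStage.nil (G := G) (Set.notMem_empty v) extNb_empty).exists_isPath_ncard_extNb_le_length
      (by simpa using hk) hn.le
  exact ⟨x, _, p.take ℓ, hp.take ℓ, by rw [Walk.take_length]; have := h U hU; omega⟩

theorem stmt_10 {V : Type*} [Fintype V] (G : SimpleGraph V) (k ℓ : ℕ)
    (hk : 0 < k) (hℓ : 0 < ℓ) (hn : k < Fintype.card V)
    (h : ∀ S : Set V, S.ncard = k → ℓ ≤ (G.extNb S).ncard) :
    ∃ (u w : V) (p : G.Walk u w), p.IsPath ∧ p.length = ℓ :=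
  stmt_10_general G k ℓ hk hn h
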